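/- (Equation (3.64)/(3.60).) For every μ₁ ∈ [0,1], with μ₂ := 1−μ₁: ∫_{ℝ²}∫_{ℝ²} (Σψ_in)(q₁,q₂)·ψ_in(q₁,q₂) dq₁ dq₂ = L(μ₁,μ₂). -/

import Mathlib

open MeasureTheory

noncomputable abbrev R2 : Type := EuclideanSpace ℝ (Fin 2)

/-- The modified Bessel function of order zero. -/
noncomputable def I0 (x : ℝ) : ℝ :=
  (1 / Real.pi) * ∫ θ in (0:ℝ)..Real.pi, Real.exp (x * Real.cos θ)

/-- The function `L(μ₁,μ₂)` of (3.65b). -/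
noncomputable def Lfun (μ₁ μ₂ : ℝ) : ℝ :=
  ∫ l in Set.Ioi (0:ℝ), ∫ r in Set.Ioi (0:ℝ),
    Real.exp (-2 * l) * Real.exp (-(μ₁ ^ 2 + μ₂ ^ 2) * r) *
      (I0 (|μ₁ - μ₂| * Real.sqrt (l * r))) ^ 2

/-- The unit vector `(cos θ, sin θ)` in `ℝ²`. -/
noncomputable def unitVec (θ : ℝ) : R2 :=
  (WithLp.equiv 2 (Fin 2 → ℝ)).symm ![Real.cos θ, Real.sin θ]

/-- The Gaussian `ψ(q) = π^{-1/2} e^{-|q|²/2}`. -/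
noncomputable def psi (q : R2) : ℝ := (1 / Real.sqrt Real.pi) * Real.exp (-‖q‖ ^ 2 / 2)

/-- The angular average `(Σψ_in)(q₁,q₂)`, with `q_cm = q₁+q₂` and `q = μ₂q₁-μ₁q₂`. -/
noncomputable def SigmaPsi (μ₁ : ℝ) (q₁ q₂ : R2) : ℝ :=
  (1 / (2 * Real.pi)) * ∫ θ in (0:ℝ)..(2 * Real.pi),
    psi (μ₁ • (q₁ + q₂) + ‖(1 - μ₁) • q₁ - μ₁ • q₂‖ • unitVec θ) *
      psi ((1 - μ₁) • (q₁ + q₂) - ‖(1 - μ₁) • q₁ - μ₁ • q₂‖ • unitVec θ)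

/-!
In the coordinates `Q = q₁ + q₂`, `q = μ₂q₁ - μ₁q₂` (a composition of shears, so Lebesgue
measure is preserved) everything is explicit: `ψ(μ₁Q + |q|e) ψ(μ₂Q - |q|e)` is `e^{⟨v, e⟩}`, with
`v = -(μ₁ - μ₂)|q|Q`, times a factor independent of the unit vector `e`, and
`∫₀^{2π} e^{⟨v, e(θ)⟩} dθ = 2π I₀(|v|)`. Integrating over `Q` in polar coordinates produces the
same Bessel factor a second time, hence `I₀²`; integrating over `q` radially and substituting
`λ = |q|²`, `ρ = |Q|²` gives `L`.
-/

open Real Set intervalIntegral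
open scoped RealInnerProductSpace

@[fun_prop]
lemma continuous_I0 : Continuous I0 :=
  continuous_const.mul (continuous_parametric_intervalIntegral_of_continuous' (by fun_prop) _ _)

lemma I0_nonneg (x : ℝ) : 0 ≤ I0 x :=
  mul_nonneg (by positivity) (integral_nonneg pi_pos.le fun _ _ => (exp_pos _).le)

lemma I0_le_exp_abs (x : ℝ) : I0 x ≤ exp |x| := by
  have hbound : ∫ θ in (0:ℝ)..π, exp (x * cos θ) ≤ ∫ _ in (0:ℝ)..π, exp |x| := by
    refine integral_mono_on pi_pos.le (Continuous.intervalIntegrable (by fun_prop) _ _)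
      intervalIntegrable_const fun θ _ => exp_le_exp.2 ?_
    calc x * cos θ ≤ |x * cos θ| := le_abs_self _
      _ = |x| * |cos θ| := abs_mul _ _
      _ ≤ |x| := mul_le_of_le_one_right (abs_nonneg _) (abs_cos_le_one θ)
  rw [intervalIntegral.integral_const, smul_eq_mul, sub_zero] at hbound
  calc I0 x ≤ 1 / π * (π * exp |x|) := mul_le_mul_of_nonneg_left hbound (by positivity)
    _ = exp |x| := by field_simp

lemma integral_exp_mul_cos (r : ℝ) : ∫ θ in -π..π, exp (r * cos θ) = 2 * π * I0 r := by
  have hint : ∀ a b : ℝ, IntervalIntegrable (fun θ => exp (r * cos θ)) volume a b :=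
    fun a b => Continuous.intervalIntegrable (by fun_prop) a b
  have heven : ∫ θ in -π..0, exp (r * cos θ) = ∫ θ in (0:ℝ)..π, exp (r * cos θ) := by
    simpa using (integral_comp_neg (a := 0) (b := π) fun θ => exp (r * cos θ)).symm
  rw [← integral_add_adjacent_intervals (hint _ 0) (hint 0 _), heven, I0]
  field_simp
  ring

lemma unitVec_apply_zero (θ : ℝ) : unitVec θ 0 = cos θ := rfl

lemma unitVec_apply_one (θ : ℝ) : unitVec θ 1 = sin θ := rfl

lemma inner_unitVec (v : R2) (θ : ℝ) : ⟪v, unitVec θ⟫ = v 0 * cos θ + v 1 * sin θ := by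
  simp [PiLp.inner_apply, Fin.sum_univ_two, unitVec_apply_zero, unitVec_apply_one, mul_comm]

lemma inner_unitVec_unitVec (φ θ : ℝ) : ⟪unitVec φ, unitVec θ⟫ = cos (θ - φ) := by
  rw [inner_unitVec, unitVec_apply_zero, unitVec_apply_one, cos_sub]
  ring

lemma norm_unitVec (θ : ℝ) : ‖unitVec θ‖ = 1 := by
  rw [norm_eq_sqrt_real_inner, inner_unitVec_unitVec, sub_self, cos_zero, sqrt_one]

lemma exists_eq_norm_smul_unitVec (v : R2) : ∃ φ, v = ‖v‖ • unitVec φ := by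
  set z : ℂ := ⟨v 0, v 1⟩
  have hz : ‖z‖ = ‖v‖ := by
    rw [EuclideanSpace.norm_eq, Fin.sum_univ_two, Complex.norm_def, Complex.normSq_apply]
    simp [z, ← sq]
  refine ⟨z.arg, ?_⟩
  ext i
  fin_cases i
  · simpa [z, unitVec_apply_zero, hz] using (Complex.norm_mul_cos_arg z).symm
  · simpa [z, unitVec_apply_one, hz] using (Complex.norm_mul_sin_arg z).symm

lemma integral_exp_inner_unitVec (v : R2) (a : ℝ) :
    ∫ θ in a..a + 2 * π, exp ⟪v, unitVec θ⟫ = 2 * π * I0 ‖v‖ := by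
  obtain ⟨φ, hφ⟩ := exists_eq_norm_smul_unitVec v
  have hper : Function.Periodic (fun θ => exp (‖v‖ * cos θ)) (2 * π) := fun θ => by
    simp only [cos_add_two_pi]
  calc ∫ θ in a..a + 2 * π, exp ⟪v, unitVec θ⟫
      = ∫ θ in a..a + 2 * π, exp (‖v‖ * cos (θ - φ)) := by
        congr! 2 with θ
        rw [hφ, real_inner_smul_left, inner_unitVec_unitVec, norm_smul, norm_norm,
          norm_unitVec, mul_one]
    _ = ∫ θ in a - φ..a - φ + 2 * π, exp (‖v‖ * cos θ) := by
        rw [integral_comp_sub_right (fun θ => exp (‖v‖ * cos θ)), sub_add_eq_add_sub]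
    _ = ∫ θ in -π..-π + 2 * π, exp (‖v‖ * cos θ) := hper.intervalIntegral_add_eq _ _
    _ = 2 * π * I0 ‖v‖ := by rw [show -π + 2 * π = π by ring, integral_exp_mul_cos]

lemma norm_sq_add_norm_sq_smul_add_sub {E : Type*} [NormedAddCommGroup E] [InnerProductSpace ℝ E]
    (μ : ℝ) (Q q : E) :
    ‖μ • Q + q‖ ^ 2 + ‖(1 - μ) • Q - q‖ ^ 2
      = (μ ^ 2 + (1 - μ) ^ 2) * ‖Q‖ ^ 2 + 2 * ‖q‖ ^ 2 + 2 * (μ - (1 - μ)) * ⟪Q, q⟫ := by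
  rw [norm_add_sq_real, norm_sub_sq_real, real_inner_smul_left, real_inner_smul_left,
    norm_smul, norm_smul, mul_pow, mul_pow, Real.norm_eq_abs, Real.norm_eq_abs, sq_abs, sq_abs]
  ring

lemma psi_mul_psi (x y : R2) : psi x * psi y = exp (-(‖x‖ ^ 2 + ‖y‖ ^ 2) / 2) / π := by
  calc psi x * psi y = exp (-‖x‖ ^ 2 / 2) * exp (-‖y‖ ^ 2 / 2) / (sqrt π * sqrt π) := by
        rw [psi, psi]; ring
    _ = exp (-(‖x‖ ^ 2 + ‖y‖ ^ 2) / 2) / π := by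
        rw [mul_self_sqrt pi_pos.le, ← exp_add]; ring_nf

lemma sigmaPsi_eq (μ₁ : ℝ) (q₁ q₂ : R2) :
    SigmaPsi μ₁ q₁ q₂ = exp (-((μ₁ ^ 2 + (1 - μ₁) ^ 2) * ‖q₁ + q₂‖ ^ 2
        + 2 * ‖(1 - μ₁) • q₁ - μ₁ • q₂‖ ^ 2) / 2) / π
      * I0 (|μ₁ - (1 - μ₁)| * (‖q₁ + q₂‖ * ‖(1 - μ₁) • q₁ - μ₁ • q₂‖)) := by
  set Q := q₁ + q₂
  set c := ‖(1 - μ₁) • q₁ - μ₁ • q₂‖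
  set d := μ₁ - (1 - μ₁)
  have hterm : ∀ θ, psi (μ₁ • Q + c • unitVec θ) * psi ((1 - μ₁) • Q - c • unitVec θ)
      = exp (-((μ₁ ^ 2 + (1 - μ₁) ^ 2) * ‖Q‖ ^ 2 + 2 * c ^ 2) / 2) / π
        * exp ⟪-(d * c) • Q, unitVec θ⟫ := by
    intro θ
    rw [psi_mul_psi, norm_sq_add_norm_sq_smul_add_sub, div_mul_eq_mul_div, ← exp_add,
      norm_smul, norm_unitVec, real_inner_smul_left, real_inner_smul_right, Real.norm_eq_abs,
      abs_of_nonneg (norm_nonneg _)]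
    congr 2
    ring
  have hnorm : ‖-(d * c) • Q‖ = |d| * (‖Q‖ * c) := by
    rw [norm_smul, norm_neg, Real.norm_eq_abs, abs_mul, abs_of_nonneg (norm_nonneg _)]
    ring
  have hangle := integral_exp_inner_unitVec (-(d * c) • Q) 0
  rw [zero_add, hnorm] at hangle
  rw [SigmaPsi, integral_congr fun θ _ => hterm θ, intervalIntegral.integral_const_mul, hangle]
  field_simp

noncomputable def cmIntegrand (μ₁ : ℝ) (Q q : R2) : ℝ :=
  exp (-(μ₁ ^ 2 + (1 - μ₁) ^ 2) * ‖Q‖ ^ 2 - 2 * ‖q‖ ^ 2 - (μ₁ - (1 - μ₁)) * ⟪Q, q⟫)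
    * I0 (|μ₁ - (1 - μ₁)| * (‖Q‖ * ‖q‖)) / π ^ 2

lemma sigmaPsi_mul_psi_mul_psi (μ₁ : ℝ) (q₁ q₂ : R2) :
    SigmaPsi μ₁ q₁ q₂ * (psi q₁ * psi q₂)
      = cmIntegrand μ₁ (q₁ + q₂) ((1 - μ₁) • q₁ - μ₁ • q₂) := by
  set Q := q₁ + q₂
  set q := (1 - μ₁) • q₁ - μ₁ • q₂
  have hsum : ‖q₁‖ ^ 2 + ‖q₂‖ ^ 2
      = (μ₁ ^ 2 + (1 - μ₁) ^ 2) * ‖Q‖ ^ 2 + 2 * ‖q‖ ^ 2 + 2 * (μ₁ - (1 - μ₁)) * ⟪Q, q⟫ := by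
    rw [← norm_sq_add_norm_sq_smul_add_sub]
    congr 3 <;> module
  rw [sigmaPsi_eq, psi_mul_psi, hsum, cmIntegrand]
  field_simp
  rw [mul_right_comm, ← exp_add]
  congr 2 <;> ring

lemma measurePreserving_add_smul_sub {E : Type*} [NormedAddCommGroup E] [NormedSpace ℝ E]
    [MeasurableSpace E] [BorelSpace E] [SecondCountableTopology E]
    (μ : Measure E) [SFinite μ] [μ.IsAddLeftInvariant] (t : ℝ) :
    MeasurePreserving (fun p : E × E => (p.1 + p.2, (1 - t) • p.1 - t • p.2))
      (μ.prod μ) (μ.prod μ) := by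
  have hshear : MeasurePreserving (fun p : E × E => (id p.1, p.2 + -(t • p.1)))
      (μ.prod μ) (μ.prod μ) :=
    (MeasurePreserving.id μ).skew_product (by fun_prop)
      (Filter.Eventually.of_forall fun x => map_add_right_eq_self μ (-(t • x)))
  convert hshear.comp (Measure.measurePreserving_swap.comp (measurePreserving_prod_add μ μ)) using 1
  ext p <;> simp only [Function.comp_apply, Prod.swap_prod_mk, id]
  · module

lemma integral_eq_integral_Ioi_mul_integral_unitVec (g : R2 → ℝ) (hg : Integrable g) :
    ∫ x, g x = ∫ r in Ioi 0, r * ∫ θ in -π..π, g (r • unitVec θ) := by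
  set e : R2 ≃ᵐ ℝ × ℝ := (MeasurableEquiv.toLp 2 (Fin 2 → ℝ)).symm.trans
    MeasurableEquiv.finTwoArrow
  have he : MeasurePreserving e.symm :=
    ((volume_preserving_finTwoArrow ℝ).comp
      (EuclideanSpace.volume_preserving_symm_measurableEquiv_toLp (Fin 2))).symm e
  have hpolar : ∀ p : ℝ × ℝ, e.symm (polarCoord.symm p) = p.1 • unitVec p.2 := by
    intro p
    ext i
    fin_cases i <;> rfl
  have hint : IntegrableOn (fun p : ℝ × ℝ => p.1 * g (p.1 • unitVec p.2))
      (Ioi 0 ×ˢ Ioo (-π) π) := by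
    have h := (integrableOn_image_iff_integrableOn_abs_det_fderiv_smul volume
      polarCoord.open_target.measurableSet
      (fun p _ => (hasFDerivAt_polarCoord_symm p).hasFDerivWithinAt)
      polarCoord.symm.injOn (g ∘ e.symm)).1
      ((he.integrable_comp_emb e.symm.measurableEmbedding).2 hg).integrableOn
    rw [polarCoord_target] at h
    refine h.congr_fun (fun p hp => ?_) (measurableSet_Ioi.prod measurableSet_Ioo)
    simp only [det_fderivPolarCoordSymm, abs_of_pos (mem_Ioi.1 hp.1), smul_eq_mul,
      Function.comp_apply, hpolar]
  calc ∫ x, g x = ∫ p, g (e.symm p) :=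
        (he.integral_comp e.symm.measurableEmbedding g).symm
    _ = ∫ p in Ioi 0 ×ˢ Ioo (-π) π, p.1 * g (p.1 • unitVec p.2) := by
        rw [← integral_comp_polarCoord_symm, polarCoord_target]
        simp only [hpolar, smul_eq_mul]
    _ = ∫ r in Ioi 0, r * ∫ θ in -π..π, g (r • unitVec θ) := by
        rw [Measure.volume_eq_prod, setIntegral_prod _ hint]
        refine setIntegral_congr_fun measurableSet_Ioi fun r _ => ?_
        rw [integral_of_le (by linarith [pi_pos]), integral_Ioc_eq_integral_Ioo,
          ← MeasureTheory.integral_const_mul]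

lemma integral_fun_norm_eq (f : ℝ → ℝ) (hf : Integrable fun x : R2 => f ‖x‖) :
    ∫ x : R2, f ‖x‖ = 2 * π * ∫ r in Ioi 0, r * f r := by
  rw [integral_eq_integral_Ioi_mul_integral_unitVec _ hf, ← MeasureTheory.integral_const_mul]
  refine setIntegral_congr_fun measurableSet_Ioi fun r hr => ?_
  simp only [norm_smul, norm_unitVec, Real.norm_of_nonneg (mem_Ioi.1 hr).le, mul_one,
    intervalIntegral.integral_const, smul_eq_mul]
  ring

lemma integral_Ioi_mul_comp_sq (φ : ℝ → ℝ) :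
    ∫ s in Ioi 0, s * φ (s ^ 2) = (∫ ρ in Ioi 0, φ ρ) / 2 := by
  rw [← integral_comp_rpow_Ioi_of_pos (g := φ) two_pos, eq_div_iff two_ne_zero,
    ← MeasureTheory.integral_mul_const]
  refine setIntegral_congr_fun measurableSet_Ioi fun s _ => ?_
  norm_num [smul_eq_mul]
  ring

lemma integrable_exp_neg_mul_sq_norm {V : Type*} [NormedAddCommGroup V] [InnerProductSpace ℝ V]
    [FiniteDimensional ℝ V] [MeasurableSpace V] [BorelSpace V] {b : ℝ} (hb : 0 < b) :
    Integrable (fun v : V => exp (-b * ‖v‖ ^ 2)) := by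
  refine (GaussianFourier.integrable_cexp_neg_mul_sq_norm_add (V := V) (b := b) (by simpa) 0 0
    ).norm.congr (ae_of_all _ fun v => ?_)
  simp only [zero_mul, add_zero, Complex.norm_exp]
  norm_cast

/-- The quadratic form has determinant `2(μ² + (1-μ)²) - (2μ-1)² = 1`, so it is positive
definite for every `μ`. -/
lemma sq_add_sq_le_mul_quadratic (μ x y : ℝ) :
    x ^ 2 + y ^ 2 ≤ (2 + (μ - (1 - μ)) ^ 2)
      * ((μ ^ 2 + (1 - μ) ^ 2) * x ^ 2 + 2 * y ^ 2 - 2 * |μ - (1 - μ)| * (x * y)) := by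
  have ha : μ ^ 2 + (1 - μ) ^ 2 = (1 + |μ - (1 - μ)| ^ 2) / 2 := by rw [sq_abs]; ring
  rw [ha, ← sq_abs (μ - (1 - μ))]
  set D := |μ - (1 - μ)|
  nlinarith [sq_nonneg (D * x - y), mul_nonneg (by positivity : (0:ℝ) ≤ 1 + D ^ 2)
    (sq_nonneg (D * x - 2 * y))]

lemma cmIntegrand_nonneg (μ₁ : ℝ) (Q q : R2) : 0 ≤ cmIntegrand μ₁ Q q :=
  div_nonneg (mul_nonneg (exp_pos _).le (I0_nonneg _)) (by positivity)

lemma continuous_cmIntegrand (μ₁ : ℝ) : Continuous fun z : R2 × R2 => cmIntegrand μ₁ z.1 z.2 := by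
  unfold cmIntegrand
  fun_prop

lemma cmIntegrand_le (μ₁ : ℝ) (Q q : R2) :
    cmIntegrand μ₁ Q q ≤ exp (-(2 + (μ₁ - (1 - μ₁)) ^ 2)⁻¹ * ‖Q‖ ^ 2)
      * exp (-(2 + (μ₁ - (1 - μ₁)) ^ 2)⁻¹ * ‖q‖ ^ 2) / π ^ 2 := by
  set d := μ₁ - (1 - μ₁)
  have hI0 : I0 (|d| * (‖Q‖ * ‖q‖)) ≤ exp (|d| * (‖Q‖ * ‖q‖)) :=
    (I0_le_exp_abs _).trans_eq (by rw [abs_of_nonneg (by positivity)])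
  have hinner : -(d * ⟪Q, q⟫) ≤ |d| * (‖Q‖ * ‖q‖) :=
    (neg_le_abs _).trans ((abs_mul _ _).trans_le
      (mul_le_mul_of_nonneg_left (abs_real_inner_le_norm Q q) (abs_nonneg d)))
  have hquad : (2 + d ^ 2)⁻¹ * (‖Q‖ ^ 2 + ‖q‖ ^ 2)
      ≤ (μ₁ ^ 2 + (1 - μ₁) ^ 2) * ‖Q‖ ^ 2 + 2 * ‖q‖ ^ 2 - 2 * |d| * (‖Q‖ * ‖q‖) := by
    rw [inv_mul_le_iff₀ (by positivity)]
    exact sq_add_sq_le_mul_quadratic μ₁ ‖Q‖ ‖q‖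
  rw [cmIntegrand, ← exp_add]
  refine div_le_div_of_nonneg_right ?_ (by positivity)
  calc exp (-(μ₁ ^ 2 + (1 - μ₁) ^ 2) * ‖Q‖ ^ 2 - 2 * ‖q‖ ^ 2 - d * ⟪Q, q⟫) * I0 (|d| * (‖Q‖ * ‖q‖))
      ≤ exp (-(μ₁ ^ 2 + (1 - μ₁) ^ 2) * ‖Q‖ ^ 2 - 2 * ‖q‖ ^ 2 - d * ⟪Q, q⟫)
        * exp (|d| * (‖Q‖ * ‖q‖)) := mul_le_mul_of_nonneg_left hI0 (exp_pos _).le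
    _ ≤ _ := by
      rw [← exp_add, exp_le_exp]
      linarith

lemma integrable_cmIntegrand (μ₁ : ℝ) :
    Integrable fun z : R2 × R2 => cmIntegrand μ₁ z.1 z.2 := by
  have hε : 0 < (2 + (μ₁ - (1 - μ₁)) ^ 2)⁻¹ := by positivity
  have hbound := ((integrable_exp_neg_mul_sq_norm (V := R2) hε).mul_prod
    (integrable_exp_neg_mul_sq_norm (V := R2) hε)).div_const (π ^ 2)
  rw [← Measure.volume_eq_prod] at hbound
  refine hbound.mono' (continuous_cmIntegrand μ₁).aestronglyMeasurable (ae_of_all _ fun z => ?_)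
  rw [Real.norm_of_nonneg (cmIntegrand_nonneg ..)]
  exact cmIntegrand_le ..

lemma integrable_cmIntegrand_left (μ₁ : ℝ) (q : R2) : Integrable fun Q => cmIntegrand μ₁ Q q := by
  have hε : 0 < (2 + (μ₁ - (1 - μ₁)) ^ 2)⁻¹ := by positivity
  refine (((integrable_exp_neg_mul_sq_norm (V := R2) hε).mul_const
    (exp (-(2 + (μ₁ - (1 - μ₁)) ^ 2)⁻¹ * ‖q‖ ^ 2))).div_const (π ^ 2)).mono'
    ((continuous_cmIntegrand μ₁).comp (continuous_id.prodMk continuous_const)).aestronglyMeasurable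
    (ae_of_all _ fun Q => ?_)
  rw [Real.norm_of_nonneg (cmIntegrand_nonneg ..)]
  exact cmIntegrand_le ..

lemma integral_cmIntegrand_left (μ₁ : ℝ) (q : R2) :
    ∫ Q, cmIntegrand μ₁ Q q = (∫ ρ in Ioi 0, exp (-2 * ‖q‖ ^ 2) * exp (-(μ₁ ^ 2 + (1 - μ₁) ^ 2) * ρ)
      * I0 (|μ₁ - (1 - μ₁)| * sqrt (‖q‖ ^ 2 * ρ)) ^ 2) / π := by
  set d := μ₁ - (1 - μ₁)
  set φ : ℝ → ℝ := fun ρ => exp (-2 * ‖q‖ ^ 2) * exp (-(μ₁ ^ 2 + (1 - μ₁) ^ 2) * ρ)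
    * I0 (|d| * sqrt (‖q‖ ^ 2 * ρ)) ^ 2
  have hradial : ∀ s ∈ Ioi (0:ℝ),
      s * ∫ θ in -π..π, cmIntegrand μ₁ (s • unitVec θ) q = s * (2 / π * φ (s ^ 2)) := by
    intro s hs
    have hsq : sqrt (‖q‖ ^ 2 * s ^ 2) = s * ‖q‖ := by
      rw [← mul_pow, sqrt_sq (by positivity [mem_Ioi.1 hs])]; ring
    have hterm : ∀ θ, cmIntegrand μ₁ (s • unitVec θ) q
        = exp (-(μ₁ ^ 2 + (1 - μ₁) ^ 2) * s ^ 2 - 2 * ‖q‖ ^ 2) * I0 (|d| * (s * ‖q‖)) / π ^ 2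
          * exp ⟪-(d * s) • q, unitVec θ⟫ := by
      intro θ
      rw [cmIntegrand, norm_smul, norm_unitVec, Real.norm_of_nonneg (mem_Ioi.1 hs).le, mul_one,
        real_inner_smul_left, real_inner_smul_left, real_inner_comm, div_mul_eq_mul_div,
        mul_right_comm, ← exp_add]
      congr 4
      ring
    have hnorm : ‖-(d * s) • q‖ = |d| * (s * ‖q‖) := by
      rw [norm_smul, norm_neg, Real.norm_eq_abs, abs_mul, abs_of_pos (mem_Ioi.1 hs)]
      ring
    have hangle := integral_exp_inner_unitVec (-(d * s) • q) (-π)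
    rw [show -π + 2 * π = π by ring, hnorm] at hangle
    rw [integral_congr fun θ _ => hterm θ, intervalIntegral.integral_const_mul, hangle]
    simp only [φ, hsq, sub_eq_add_neg, exp_add]
    field_simp
  rw [integral_eq_integral_Ioi_mul_integral_unitVec _ (integrable_cmIntegrand_left μ₁ q),
    setIntegral_congr_fun measurableSet_Ioi hradial,
    integral_Ioi_mul_comp_sq (fun ρ => 2 / π * φ ρ), MeasureTheory.integral_const_mul]
  ring

theorem sigma_psi_integral_eq_L_general (μ₁ : ℝ) :
    (∫ x : R2 × R2, SigmaPsi μ₁ x.1 x.2 * (psi x.1 * psi x.2)) = Lfun μ₁ (1 - μ₁) := by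
  set Φ : ℝ → ℝ := fun l => ∫ r in Ioi 0, exp (-2 * l) * exp (-(μ₁ ^ 2 + (1 - μ₁) ^ 2) * r)
    * I0 (|μ₁ - (1 - μ₁)| * sqrt (l * r)) ^ 2
  have hG := integrable_cmIntegrand μ₁
  rw [Measure.volume_eq_prod] at hG ⊢
  have hT := measurePreserving_add_smul_sub (volume : Measure R2) μ₁
  have hinner : ∀ q : R2, ∫ Q, cmIntegrand μ₁ Q q = Φ (‖q‖ ^ 2) / π :=
    integral_cmIntegrand_left μ₁
  calc ∫ x : R2 × R2, SigmaPsi μ₁ x.1 x.2 * (psi x.1 * psi x.2) ∂volume.prod volume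
      = ∫ x : R2 × R2, cmIntegrand μ₁ (x.1 + x.2) ((1 - μ₁) • x.1 - μ₁ • x.2)
          ∂volume.prod volume := by simp_rw [sigmaPsi_mul_psi_mul_psi]
    _ = ∫ z : R2 × R2, cmIntegrand μ₁ z.1 z.2 ∂volume.prod volume := by
        have h := integral_map (f := fun z : R2 × R2 => cmIntegrand μ₁ z.1 z.2)
          hT.measurable.aemeasurable (hT.map_eq ▸ hG.aestronglyMeasurable)
        rw [hT.map_eq] at h
        exact h.symm
    _ = ∫ q : R2, Φ (‖q‖ ^ 2) / π := by
        rw [integral_prod_symm _ hG]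
        simp_rw [hinner]
    _ = 2 * π * ∫ t in Ioi 0, t * (Φ (t ^ 2) / π) := by
        refine integral_fun_norm_eq (fun t => Φ (t ^ 2) / π) ?_
        simpa only [hinner] using hG.integral_prod_right
    _ = Lfun μ₁ (1 - μ₁) := by
        rw [integral_Ioi_mul_comp_sq fun l => Φ l / π, MeasureTheory.integral_div]
        field_simp
        rfl

/-- Equation (3.64)/(3.60): `∫∫ (Σψ_in)(q₁,q₂) ψ_in(q₁,q₂) dq₁ dq₂ = L(μ₁,μ₂)`. -/
theorem sigma_psi_integral_eq_L (μ₁ : ℝ) (hμ : μ₁ ∈ Set.Icc (0:ℝ) 1) :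
    (∫ x : R2 × R2, SigmaPsi μ₁ x.1 x.2 * (psi x.1 * psi x.2)) = Lfun μ₁ (1 - μ₁) :=
  sigma_psi_integral_eq_L_general μ₁
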